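/- If λ is a k-bounded partition with main hook-length h_M(λ) ≤ k, then the k-Schur function equals the Schur function: s_λ^{(k)} = s_λ. -/

import Mathlib

open scoped BigOperators Classical

noncomputable section

/-- Model of the ring of symmetric functions `Λ = ℚ[h₁,h₂,…]`: the polynomial
ring on the (algebraically independent) complete homogeneous generators. -/
abbrev SymFn : Type := MvPolynomial ℕ ℚ

/-- The complete homogeneous symmetric function `h_r` (`h_0 = 1`). -/
def hh : ℕ → SymFn
  | 0 => 1
  | r + 1 => MvPolynomial.X r

/-- `h_n` for an integer index, with `h_n = 0` for `n < 0`. -/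
def hZ (n : ℤ) : SymFn := if n < 0 then 0 else hh n.toNat

/-- `h_λ = h_{λ₁} h_{λ₂} ⋯`. -/
def hProd (l : List ℕ) : SymFn := (l.map hh).prod

/-- The Schur function via the Jacobi–Trudi determinant
`s_λ = det(h_{λ_i - i + j})_{1 ≤ i,j ≤ ℓ(λ)}`. -/
def schur (l : List ℕ) : SymFn :=
  Matrix.det (Matrix.of fun i j : Fin l.length =>
    hZ (((l.get i : ℕ) : ℤ) - ((i : ℕ) : ℤ) + ((j : ℕ) : ℤ)))

/-- A partition: a weakly decreasing list of positive integers. -/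
def IsPartition (l : List ℕ) : Prop := l.Pairwise (· ≥ ·) ∧ ∀ x ∈ l, 0 < x

/-- A `k`-bounded partition: all parts at most `k`. -/
def KBounded (k : ℕ) (l : List ℕ) : Prop := ∀ x ∈ l, x ≤ k

/-- The main hook-length `h_M(λ) = λ₁ + ℓ(λ) - 1`. -/
def mainHook (l : List ℕ) : ℕ := l.headI + l.length - 1

/-- Dominance order: `Dominates μ λ` means `μ ≥ λ`, i.e.
`λ₁ + ⋯ + λ_i ≤ μ₁ + ⋯ + μ_i` for all `i`. -/
def Dominates (mu lam : List ℕ) : Prop := ∀ i : ℕ, (lam.take i).sum ≤ (mu.take i).sum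

/-- Auxiliary function (with fuel) computing the `k`-split of a partition:
successive blocks of main hook-length exactly `k` (the last block having
main hook-length at most `k`). -/
def kSplitAux (k : ℕ) : ℕ → List ℕ → List (List ℕ)
  | _, [] => []
  | 0, l => [l]
  | fuel + 1, a :: rest =>
    if (a :: rest).length ≤ k + 1 - a ∨ k + 1 - a = 0 then [a :: rest]
    else (a :: rest).take (k + 1 - a) :: kSplitAux k fuel ((a :: rest).drop (k + 1 - a))

/-- The `k`-split `λ^{→k}` of a `k`-bounded partition `λ`. -/
def kSplit (k : ℕ) (l : List ℕ) : List (List ℕ) := kSplitAux k l.length l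

/-- The `k`-split polynomial `G_λ^{(k)} = s_{λ^{(1)}} s_{λ^{(2)}} ⋯ s_{λ^{(r)}}`. -/
def Gk (k : ℕ) (l : List ℕ) : SymFn := ((kSplit k l).map schur).prod

/-- `Λ^{(k)}`: the linear span of the `h_λ` over `k`-bounded partitions `λ`. -/
def LamK (k : ℕ) : Submodule ℚ SymFn :=
  Submodule.span ℚ {f : SymFn | ∃ l : List ℕ, IsPartition l ∧ KBounded k l ∧ f = hProd l}

/-- The `k`-Schur functions (at `t = 1`), defined recursively from a family `T`
of projection operators by `s_λ^{(k)} = T_{λ₁} (s_{λ₁} ⋅ s_{(λ₂,λ₃,…)}^{(k)})`,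
starting from `s_{()}^{(k)} = 1`. -/
def kSchurWith (T : ℕ → (SymFn →ₗ[ℚ] SymFn)) : List ℕ → SymFn
  | [] => 1
  | a :: rest => T a (schur [a] * kSchurWith T rest)

/-- `T` is a family of projection operators for `Λ^{(k)}`:
`T_j G_λ^{(k)} = G_λ^{(k)}` if `λ₁ = j` and `0` otherwise, for every
`k`-bounded partition `λ`.  (Any such family restricts to the projection
operator of Lapointe–Morse on `Λ^{(k)}`.) -/
def ProjOps (k : ℕ) (T : ℕ → (SymFn →ₗ[ℚ] SymFn)) : Prop :=
  ∀ (j : ℕ) (l : List ℕ), IsPartition l → KBounded k l →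
    T j (Gk k l) = if l.headI = j then Gk k l else 0

/-!
Induct on `λ = (a, rest)`: since `s_rest^{(k)} = s_rest`, we get
`s_λ^{(k)} = T_a (h_a s_rest)`. Expanding the Jacobi–Trudi determinant of `s_λ` along its first
row gives `h_a s_rest = s_λ + (a combination of h_μ, μ k-bounded with a part > a)`, because
every entry of the matrix is some `h_r` with `r ≤ h_M(λ) ≤ k`. As `h_M(λ) ≤ k`, `λ` is its own
`k`-split, so `T_a s_λ = T_a G_λ = s_λ`. It remains to see that `T_a` kills each such `h_μ`,
i.e. that `h_μ` lies in the span of the `G_ν` with `ν₁ > a`. This comes from unitriangularity: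
`G_ν = h_ν + (h_μ with μ strictly "heavier" than ν and with a part ≥ ν₁)`, proved block by
block from Jacobi–Trudi using the rearrangement inequality, where heavier means a larger
`∑ μᵢ²`; a downward induction on this weight then writes every `h_μ` in terms of the `G_ν`.
-/

lemma le_headI_of_mem {l : List ℕ} (hl : l.Pairwise (· ≥ ·)) {x : ℕ} (hx : x ∈ l) :
    x ≤ l.headI := by
  cases l with
  | nil => simp at hx
  | cons a t => exact (List.mem_cons.mp hx).elim le_of_eq (List.rel_of_pairwise_cons hl)

lemma kBounded_of_mainHook_le {k : ℕ} {l : List ℕ} (hl : l.Pairwise (· ≥ ·))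
    (hhook : mainHook l ≤ k) : KBounded k l := fun x hx => by
  have := le_headI_of_mem hl hx
  have := List.length_pos_of_mem hx
  unfold mainHook at hhook
  omega

lemma mainHook_le_of_cons {a : ℕ} {rest : List ℕ} (hrest : ∀ x ∈ rest, x ≤ a) :
    mainHook rest ≤ mainHook (a :: rest) := by
  cases rest with
  | nil => simp [mainHook]
  | cons b rest =>
    have := hrest b List.mem_cons_self
    simp only [mainHook, List.headI_cons, List.length_cons]
    omega

lemma coe_eq_map_get (l : List ℕ) : (l : Multiset ℕ) = Finset.univ.val.map l.get := by
  rw [Fin.univ_val_map, List.ofFn_get]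

def hMonomial (m : Multiset ℕ) : SymFn := (m.map hh).prod

def sqSum (m : Multiset ℕ) : ℕ := (m.map (· ^ 2)).sum

def hSpan (P : Multiset ℕ → Prop) : Submodule ℚ SymFn :=
  Submodule.span ℚ (hMonomial '' {m | P m})

lemma hMonomial_add (m m' : Multiset ℕ) : hMonomial (m + m') = hMonomial m * hMonomial m' := by
  simp [hMonomial]

lemma hMonomial_singleton (b : ℕ) : hMonomial {b} = hh b := by
  simp [hMonomial]

lemma hMonomial_coe (l : List ℕ) : hMonomial l = hProd l := by
  simp [hMonomial, hProd]

lemma hProd_append (l l' : List ℕ) : hProd (l ++ l') = hProd l * hProd l' := by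
  simp [hProd]

lemma sqSum_add (m m' : Multiset ℕ) : sqSum (m + m') = sqSum m + sqSum m' := by
  simp [sqSum]

lemma sqSum_le_sum_sq (m : Multiset ℕ) : sqSum m ≤ m.sum ^ 2 := by
  induction m using Multiset.induction with
  | empty => simp [sqSum]
  | cons a m ih =>
    simp only [sqSum, Multiset.map_cons, Multiset.sum_cons] at ih ⊢
    rw [add_sq]
    linarith [Nat.zero_le (2 * a * m.sum)]

lemma exists_eq_filter_pos_add_replicate (m : Multiset ℕ) :
    ∃ n, m = m.filter (0 < ·) + Multiset.replicate n 0 := by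
  refine ⟨Multiset.card (m.filter fun x => ¬ 0 < x),
    (Multiset.filter_add_not (fun x : ℕ => 0 < x) m).symm.trans ?_⟩
  congr 1
  exact Multiset.eq_replicate_card.mpr fun x hx => by simpa using Multiset.of_mem_filter hx

lemma hMonomial_mem_hSpan {P : Multiset ℕ → Prop} {m : Multiset ℕ} (h : P m) :
    hMonomial m ∈ hSpan P :=
  Submodule.subset_span ⟨m, h, rfl⟩

lemma hSpan_mono {P Q : Multiset ℕ → Prop} (h : ∀ m, P m → Q m) : hSpan P ≤ hSpan Q :=
  Submodule.span_mono (Set.image_mono h)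

lemma mul_mem_hSpan {P Q R : Multiset ℕ → Prop} (h : ∀ m m', P m → Q m' → R (m + m'))
    {f g : SymFn} (hf : f ∈ hSpan P) (hg : g ∈ hSpan Q) : f * g ∈ hSpan R := by
  have hle : hSpan P * hSpan Q ≤ hSpan R := by
    rw [hSpan, hSpan, Submodule.span_mul_span, Submodule.span_le]
    rintro _ ⟨_, ⟨m, hm, rfl⟩, _, ⟨m', hm', rfl⟩, rfl⟩
    simpa only [SetLike.mem_coe, ← hMonomial_add] using hMonomial_mem_hSpan (h m m' hm hm')
  exact hle (Submodule.mul_mem_mul hf hg)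

lemma intCast_mul_mem {R A : Type*} [Ring R] [Ring A] [Module R A] (P : Submodule R A) (z : ℤ)
    {f : A} (hf : f ∈ P) : (z : A) * f ∈ P := by
  rw [← zsmul_eq_mul]
  exact zsmul_mem hf z

lemma prod_hZ_mem_hSpan {n : ℕ} {c : Fin n → ℤ} {P : Multiset ℕ → Prop}
    (hP : (∀ i, 0 ≤ c i) → P (Finset.univ.val.map fun i => (c i).toNat)) :
    ∏ i, hZ (c i) ∈ hSpan P := by
  by_cases hc : ∀ i, 0 ≤ c i
  · convert hMonomial_mem_hSpan (hP hc) using 1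
    simp only [hMonomial, Multiset.map_map, Function.comp_def, Finset.prod]
    congr 1
    exact Multiset.map_congr rfl fun i _ => by simp [hZ, not_lt.mpr (hc i)]
  · push Not at hc
    obtain ⟨i, hi⟩ := hc
    rw [Finset.prod_eq_zero (Finset.mem_univ i) (by simp [hZ, hi])]
    exact zero_mem _

lemma cast_sum_map_toNat {n : ℕ} {c : Fin n → ℤ} (hc : ∀ i, 0 ≤ c i) :
    (((Finset.univ.val.map fun i => (c i).toNat).sum : ℕ) : ℤ) = ∑ i, c i := by
  rw [Nat.cast_multiset_sum, Multiset.map_map]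
  exact Finset.sum_congr rfl fun i _ => Int.toNat_of_nonneg (hc i)

lemma cast_sqSum_map_toNat {n : ℕ} {c : Fin n → ℤ} (hc : ∀ i, 0 ≤ c i) :
    ((sqSum (Finset.univ.val.map fun i => (c i).toNat) : ℕ) : ℤ) = ∑ i, c i ^ 2 := by
  rw [sqSum, Nat.cast_multiset_sum, Multiset.map_map, Multiset.map_map]
  exact Finset.sum_congr rfl fun i _ => by simp [Int.toNat_of_nonneg (hc i)]

lemma det_hZ_mem_hSpan {n k : ℕ} (e : Fin n → Fin n → ℤ) (he : ∀ i j, e i j ≤ k) :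
    (Matrix.of fun i j => hZ (e i j)).det ∈ hSpan fun m => ∀ x ∈ m, x ≤ k := by
  rw [Matrix.det_apply']
  refine Submodule.sum_mem _ fun τ _ => intCast_mul_mem _ _ (prod_hZ_mem_hSpan fun _ => ?_)
  simp only [Multiset.mem_map]
  rintro _ ⟨i, _, rfl⟩
  exact Int.toNat_le.mpr (he _ _)

lemma schur_nil : schur [] = 1 := by
  simp [schur]

lemma schur_singleton (a : ℕ) : schur [a] = hh a := by
  simp [schur, hZ]

lemma hh_mul_mem_hSpan {k a b : ℕ} (hab : a < b) (hbk : b ≤ k) {f : SymFn}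
    (hf : f ∈ hSpan fun m => ∀ x ∈ m, x ≤ k) :
    hh b * f ∈ hSpan fun m => (∀ x ∈ m, x ≤ k) ∧ ∃ x ∈ m, a < x := by
  rw [← hMonomial_singleton]
  refine mul_mem_hSpan (P := (· = {b})) ?_ (hMonomial_mem_hSpan rfl) hf
  rintro _ m rfl hm
  simp only [Multiset.singleton_add, Multiset.mem_cons, forall_eq_or_imp, exists_eq_or_imp]
  exact ⟨⟨hbk, hm⟩, Or.inl hab⟩

lemma schur_cons_sub_mem_hSpan {k a : ℕ} {rest : List ℕ} (hrest : ∀ x ∈ rest, x ≤ a)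
    (hak : a + rest.length ≤ k) :
    schur (a :: rest) - hh a * schur rest ∈
      hSpan fun m => (∀ x ∈ m, x ≤ k) ∧ ∃ x ∈ m, a < x := by
  have hrow : ∀ j : Fin (rest.length + 1),
      hZ (((a :: rest).get 0 : ℤ) - (((0 : Fin (rest.length + 1)) : ℕ) : ℤ)
        + ((j : ℕ) : ℤ)) = hh (a + j) := by
    intro j
    simp [hZ]
    rfl
  have hminor : (Matrix.of fun i j : Fin rest.length =>
      hZ (((a :: rest).get i.succ : ℤ) - ((i.succ : ℕ) : ℤ) + ((j.succ : ℕ) : ℤ))) =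
      Matrix.of fun i j : Fin rest.length =>
        hZ ((rest.get i : ℤ) - ((i : ℕ) : ℤ) + ((j : ℕ) : ℤ)) := by
    ext i j : 1
    change hZ ((rest.get i : ℤ) - ((i.succ : ℕ) : ℤ) + ((j.succ : ℕ) : ℤ)) = _
    simp only [Matrix.of_apply, Fin.val_succ]
    congr 1
    push_cast
    ring
  rw [schur, Matrix.det_succ_row_zero, Fin.sum_univ_succ]
  simp only [Fin.succAbove_zero, Matrix.of_apply, Matrix.submatrix, hrow, hminor]
  rw [← schur, Fin.val_zero, pow_zero, one_mul, add_zero, add_sub_cancel_left]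
  refine Submodule.sum_mem _ fun j _ => ?_
  rw [show (-1 : SymFn) ^ (j.succ : ℕ) = (((-1 : ℤ) ^ (j.succ : ℕ) : ℤ) : SymFn) by
    push_cast; rfl, mul_assoc]
  refine intCast_mul_mem _ _ (hh_mul_mem_hSpan (by simp) (by simp; omega)
    (det_hZ_mem_hSpan _ fun i c => ?_))
  have hget : (a :: rest).get i.succ ≤ a := hrest _ (rest.get_mem i)
  have hcol := (j.succ.succAbove c).isLt
  simp only [Fin.val_succ]
  omega

lemma sum_sq_add_lt_sum_sq_comp_perm_add {n : ℕ} {x : Fin n → ℤ} (hx : StrictAnti x)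
    {τ : Equiv.Perm (Fin n)} (hτ : τ ≠ 1) :
    ∑ i, (x i + ((i : ℕ) : ℤ)) ^ 2 < ∑ i, (x (τ i) + ((i : ℕ) : ℤ)) ^ 2 := by
  have hanti : Antivary x fun i : Fin n => ((i : ℕ) : ℤ) := fun i j hij =>
    (hx (Fin.lt_def.mpr (by simpa using hij))).le
  have hcross : ∑ i, x i * ((i : ℕ) : ℤ) < ∑ i, x (τ i) * ((i : ℕ) : ℤ) := by
    refine hanti.sum_mul_lt_sum_comp_perm_mul_iff.mpr fun hτanti => hτ ?_
    have hmono : StrictMono τ := fun i j hij =>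
      lt_of_le_of_ne
        (hx.le_iff_ge.mp (hτanti (show ((i : ℕ) : ℤ) < ((j : ℕ) : ℤ) by exact_mod_cast hij)))
        (τ.injective.ne hij.ne)
    exact Equiv.ext fun i => hmono.apply_eq
  have hsq : ∑ i, x (τ i) ^ 2 = ∑ i, x i ^ 2 := Equiv.sum_comp τ fun j => x j ^ 2
  simp only [add_sq, Finset.sum_add_distrib, hsq, mul_assoc, ← Finset.mul_sum]
  linarith

lemma sum_sq_get_lt_sum_sq_jacobiTrudi {l : List ℕ} (hl : l.Pairwise (· ≥ ·))
    {τ : Equiv.Perm (Fin l.length)} (hτ : τ ≠ 1) :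
    ∑ i, ((l.get i : ℕ) : ℤ) ^ 2 <
      ∑ i, ((l.get (τ i) : ℤ) - ((τ i : ℕ) : ℤ) + ((i : ℕ) : ℤ)) ^ 2 := by
  have hanti : StrictAnti fun i : Fin l.length => (l.get i : ℤ) - ((i : ℕ) : ℤ) := by
    intro i j hij
    have := List.pairwise_iff_get.mp hl i j hij
    have : (i : ℕ) < j := hij
    dsimp only
    omega
  simpa only [sub_add_cancel] using sum_sq_add_lt_sum_sq_comp_perm_add hanti hτ

/-- `sqSum` strictly increases along the dominance order, so this is a numerical stand-in for
"`m` strictly dominates `l`" in the unitriangularity of Jacobi–Trudi and of the `G_λ`. -/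
def Heavier (k : ℕ) (l : List ℕ) (m : Multiset ℕ) : Prop :=
  (∀ x ∈ m, x ≤ k) ∧ m.sum = l.sum ∧ sqSum l < sqSum m ∧ ∃ x ∈ m, l.headI ≤ x

lemma heavier_jacobiTrudi_indices {k : ℕ} {l : List ℕ} (hl : l.Pairwise (· ≥ ·))
    (hhook : mainHook l ≤ k) {τ : Equiv.Perm (Fin l.length)} (hτ : τ ≠ 1)
    (hc : ∀ i, 0 ≤ (l.get (τ i) : ℤ) - ((τ i : ℕ) : ℤ) + ((i : ℕ) : ℤ)) :
    Heavier k l (Finset.univ.val.map fun i =>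
      ((l.get (τ i) : ℤ) - ((τ i : ℕ) : ℤ) + ((i : ℕ) : ℤ)).toNat) := by
  obtain ⟨i₀, -⟩ := not_forall.mp (mt Equiv.ext hτ)
  have hlen : 0 < l.length := i₀.pos
  have hhead : l.get ⟨0, hlen⟩ = l.headI := by
    cases l with
    | nil => simp at hlen
    | cons => rfl
  have hl' : (l : Multiset ℕ) = Finset.univ.val.map fun i => ((l.get i : ℕ) : ℤ).toNat := by
    rw [coe_eq_map_get]
    simp only [Int.toNat_natCast]
  refine ⟨?bounded, ?sum, ?sqSum, ?part⟩
  case bounded =>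
    simp only [Multiset.mem_map]
    rintro _ ⟨i, -, rfl⟩
    have hle := le_headI_of_mem hl (l.get_mem (τ i))
    have hi := i.isLt
    unfold mainHook at hhook
    omega
  case sum =>
    have hsum := cast_sum_map_toNat hc
    have hsum_l := cast_sum_map_toNat fun i => Int.natCast_nonneg (l.get i)
    rw [← hl', Multiset.sum_coe] at hsum_l
    simp only [Finset.sum_add_distrib, Finset.sum_sub_distrib,
      Equiv.sum_comp τ fun j => ((l.get j : ℕ) : ℤ),
      Equiv.sum_comp τ fun j => ((j : ℕ) : ℤ),
      sub_add_cancel] at hsum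
    exact_mod_cast hsum.trans hsum_l.symm
  case sqSum =>
    have hsq := cast_sqSum_map_toNat hc
    have hsq_l := cast_sqSum_map_toNat fun i => Int.natCast_nonneg (l.get i)
    rw [← hl'] at hsq_l
    have key := sum_sq_get_lt_sum_sq_jacobiTrudi hl hτ
    rw [← hsq, ← hsq_l] at key
    exact_mod_cast key
  case part =>
    -- the term uses the entry in row `0`, column `τ⁻¹ 0`, which is `h_{λ₁ + τ⁻¹ 0}`
    refine ⟨_, Multiset.mem_map_of_mem _ (Finset.mem_univ_val (τ.symm ⟨0, hlen⟩)), ?_⟩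
    rw [Equiv.apply_symm_apply, hhead]
    dsimp only
    omega

lemma schur_sub_hProd_mem_hSpan_heavier {k : ℕ} {l : List ℕ} (hl : l.Pairwise (· ≥ ·))
    (hhook : mainHook l ≤ k) : schur l - hProd l ∈ hSpan (Heavier k l) := by
  have hid :
      ∏ i : Fin l.length, hZ ((l.get i : ℤ) - ((i : ℕ) : ℤ) + ((i : ℕ) : ℤ)) = hProd l := by
    have hdiag : ∀ i : Fin l.length, hZ ((l.get i : ℤ) - ((i : ℕ) : ℤ) + ((i : ℕ) : ℤ))
        = hh (l.get i) := by simp [hZ]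
    rw [Finset.prod_congr rfl fun i _ => hdiag i, ← hMonomial_coe, hMonomial, coe_eq_map_get,
      Multiset.map_map]
    rfl
  rw [schur, Matrix.det_apply', ← Finset.add_sum_erase _ _ (Finset.mem_univ 1)]
  simp only [Equiv.Perm.sign_one, Units.val_one, Int.cast_one, one_mul, Equiv.Perm.one_apply,
    Matrix.of_apply, hid, add_sub_cancel_left]
  refine Submodule.sum_mem _ fun τ hτ => intCast_mul_mem _ _ (prod_hZ_mem_hSpan
    (heavier_jacobiTrudi_indices hl hhook (Finset.ne_of_mem_erase hτ)))

lemma mul_sub_hProd_append_mem_hSpan_heavier {k : ℕ} {B C : List ℕ} {f g : SymFn}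
    (hBne : B ≠ []) (hB : KBounded k B) (hC : KBounded k C)
    (hf : f - hProd B ∈ hSpan (Heavier k B)) (hg : g - hProd C ∈ hSpan (Heavier k C)) :
    f * g - hProd (B ++ C) ∈ hSpan (Heavier k (B ++ C)) := by
  have hgC :
      g ∈ hSpan fun m => (∀ x ∈ m, x ≤ k) ∧ m.sum = C.sum ∧ sqSum C ≤ sqSum m := by
    rw [← sub_add_cancel g (hProd C), ← hMonomial_coe]
    exact add_mem (hSpan_mono (fun m hm => ⟨hm.1, hm.2.1, hm.2.2.1.le⟩) hg)
      (hMonomial_mem_hSpan ⟨hC, Multiset.sum_coe C, le_rfl⟩)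
  obtain ⟨b, B', rfl⟩ := List.exists_cons_of_ne_nil hBne
  rw [show f * g - hProd (b :: B' ++ C)
      = (f - hProd (b :: B')) * g + hProd (b :: B') * (g - hProd C) by rw [hProd_append]; ring,
    ← hMonomial_coe]
  refine add_mem (mul_mem_hSpan ?_ hf hgC) (mul_mem_hSpan ?_ (hMonomial_mem_hSpan rfl) hg)
  · rintro m m' ⟨hk, hsum, hsq, x, hx, hbx⟩ ⟨hk', hsum', hsq'⟩
    refine ⟨fun y hy => (Multiset.mem_add.mp hy).elim (hk y) (hk' y),
      by simp [hsum, hsum', add_assoc], ?_, x, Multiset.mem_add.mpr (Or.inl hx), hbx⟩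
    rw [← Multiset.coe_add, sqSum_add, sqSum_add]
    omega
  · rintro _ m' rfl ⟨hk', hsum', hsq', -⟩
    refine ⟨fun y hy => (Multiset.mem_add.mp hy).elim (hB y) (hk' y),
      by simp [hsum', add_assoc], ?_, b, Multiset.mem_add.mpr (Or.inl List.mem_cons_self), le_rfl⟩
    rw [← Multiset.coe_add, sqSum_add, sqSum_add]
    omega

lemma prod_map_schur_kSplitAux_sub_hProd_mem_hSpan_heavier {k : ℕ} (fuel : ℕ) {l : List ℕ}
    (hfuel : l.length ≤ fuel) (hl : l.Pairwise (· ≥ ·)) (hb : KBounded k l) :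
    ((kSplitAux k fuel l).map schur).prod - hProd l ∈ hSpan (Heavier k l) := by
  induction fuel generalizing l with
  | zero =>
    rw [List.eq_nil_of_length_eq_zero (Nat.le_zero.mp hfuel)]
    simp [kSplitAux, hProd]
  | succ fuel ih =>
    cases l with
    | nil => simp [kSplitAux, hProd]
    | cons a rest =>
      have ha : a ≤ k := hb a List.mem_cons_self
      rw [kSplitAux]
      split_ifs with hsplit
      · rw [List.map_singleton, List.prod_singleton]
        refine schur_sub_hProd_mem_hSpan_heavier hl ?_
        simp only [mainHook, List.headI_cons]
        omega
      · set t := k + 1 - a with ht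
        simp only [List.length_cons, not_or] at hsplit hfuel
        have htake : mainHook ((a :: rest).take t) ≤ k := by
          obtain ⟨t', ht'⟩ : ∃ t', t = t' + 1 := ⟨t - 1, by omega⟩
          rw [ht', List.take_succ_cons, mainHook, List.headI_cons, List.length_cons,
            List.length_take]
          omega
        have := mul_sub_hProd_append_mem_hSpan_heavier (f := schur ((a :: rest).take t))
          (by simp; omega) (fun x hx => hb x (List.mem_of_mem_take hx))
          (fun x hx => hb x (List.mem_of_mem_drop hx))
          (schur_sub_hProd_mem_hSpan_heavier (hl.sublist (List.take_sublist _ _)) htake)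
          (ih (l := (a :: rest).drop t) (by simp; omega) (hl.sublist (List.drop_sublist _ _))
            (fun x hx => hb x (List.mem_of_mem_drop hx)))
        rwa [List.take_append_drop] at this

lemma Gk_sub_hProd_mem_hSpan_heavier {k : ℕ} {l : List ℕ} (hl : l.Pairwise (· ≥ ·))
    (hb : KBounded k l) : Gk k l - hProd l ∈ hSpan (Heavier k l) :=
  prod_map_schur_kSplitAux_sub_hProd_mem_hSpan_heavier l.length le_rfl hl hb

lemma Gk_eq_schur_of_mainHook_le {k : ℕ} {l : List ℕ} (hhook : mainHook l ≤ k) :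
    Gk k l = schur l := by
  cases l with
  | nil => simp [Gk, kSplit, kSplitAux, schur_nil]
  | cons a rest =>
    simp only [mainHook, List.headI_cons, List.length_cons] at hhook
    rw [Gk, kSplit, List.length_cons, kSplitAux, if_pos (Or.inl (by simp; omega))]
    simp

def gSpanAbove (k a : ℕ) : Submodule ℚ SymFn :=
  Submodule.span ℚ (Gk k '' {l | IsPartition l ∧ KBounded k l ∧ a < l.headI})

lemma hMonomial_mem_gSpanAbove {k a : ℕ} {m : Multiset ℕ} (hk : ∀ x ∈ m, x ≤ k)
    (ha : ∃ x ∈ m, a < x) : hMonomial m ∈ gSpanAbove k a := by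
  -- downward induction on `sqSum m`, which is at most `m.sum ^ 2`
  induction hd : m.sum ^ 2 - sqSum m using Nat.strong_induction_on generalizing m with
  | _ d ih =>
  set ν := (m.filter (0 < ·)).sort (· ≥ ·)
  have hν : (ν : Multiset ℕ) = m.filter (0 < ·) := Multiset.sort_eq _ _
  have hmemν : ∀ {x}, x ∈ ν ↔ x ∈ m ∧ 0 < x := by
    intro x
    rw [← Multiset.mem_coe, hν, Multiset.mem_filter]
  obtain ⟨n, hn⟩ := exists_eq_filter_pos_add_replicate m
  have hsum : ν.sum = m.sum := by
    conv_rhs => rw [hn]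
    rw [← Multiset.sum_coe, hν]
    simp
  have hsq : sqSum ν = sqSum m := by
    conv_rhs => rw [hn]
    simp [hν, sqSum]
  have hprod : hProd ν = hMonomial m := by
    conv_rhs => rw [hn]
    simp [← hMonomial_coe, hν, hMonomial, hh]
  obtain ⟨x, hxm, hax⟩ := ha
  have hpart : IsPartition ν := ⟨Multiset.pairwise_sort _ _, fun y hy => (hmemν.mp hy).2⟩
  have hbν : KBounded k ν := fun y hy => hk y (hmemν.mp hy).1
  have haν : a < ν.headI :=
    hax.trans_le (le_headI_of_mem hpart.1 (hmemν.mpr ⟨hxm, by omega⟩))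
  have hG : Gk k ν ∈ gSpanAbove k a :=
    Submodule.subset_span ⟨ν, ⟨hpart, hbν, haν⟩, rfl⟩
  have hheavier : hSpan (Heavier k ν) ≤ gSpanAbove k a := by
    refine Submodule.span_le.mpr ?_
    rintro _ ⟨m', ⟨hk', hsum', hsq', y, hy, hνy⟩, rfl⟩
    have := sqSum_le_sum_sq m'
    rw [hsum', hsum] at this
    exact ih _ (by rw [hsum', hsum]; omega) hk' ⟨y, hy, haν.trans_le hνy⟩ rfl
  rw [← hprod, ← sub_sub_cancel (Gk k ν) (hProd ν)]
  exact sub_mem hG (hheavier (Gk_sub_hProd_mem_hSpan_heavier hpart.1 hbν))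

lemma hSpan_le_gSpanAbove (k a : ℕ) :
    hSpan (fun m => (∀ x ∈ m, x ≤ k) ∧ ∃ x ∈ m, a < x) ≤ gSpanAbove k a :=
  Submodule.span_le.mpr fun _ ⟨_, ⟨hk, ha⟩, hm⟩ => hm ▸ hMonomial_mem_gSpanAbove hk ha

lemma ProjOps.map_eq_zero_of_mem_gSpanAbove {k : ℕ} {T : ℕ → SymFn →ₗ[ℚ] SymFn}
    (hT : ProjOps k T) {a : ℕ} {f : SymFn} (hf : f ∈ gSpanAbove k a) : T a f = 0 := by
  refine (Submodule.span_le (p := LinearMap.ker (T a)).mpr ?_) hf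
  rintro _ ⟨l, ⟨hl, hb, ha⟩, rfl⟩
  simp [hT a l hl hb, ha.ne']

lemma ProjOps.map_schur_of_mainHook_le {k : ℕ} {T : ℕ → SymFn →ₗ[ℚ] SymFn}
    (hT : ProjOps k T) {a : ℕ} {rest : List ℕ} (hl : IsPartition (a :: rest))
    (hhook : mainHook (a :: rest) ≤ k) : T a (schur (a :: rest)) = schur (a :: rest) := by
  rw [← Gk_eq_schur_of_mainHook_le hhook, hT a _ hl (kBounded_of_mainHook_le hl.1 hhook),
    List.headI_cons, if_pos rfl]

theorem kSchur_eq_schur_of_mainHook_le_general (k : ℕ)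
    (T : ℕ → (SymFn →ₗ[ℚ] SymFn)) (hT : ProjOps k T)
    (l : List ℕ) (hl : IsPartition l)
    (hhook : mainHook l ≤ k) :
    kSchurWith T l = schur l := by
  induction l with
  | nil => exact schur_nil.symm
  | cons a rest ih =>
    have hle : ∀ x ∈ rest, x ≤ a := fun x hx => List.rel_of_pairwise_cons hl.1 hx
    have hak : a + rest.length ≤ k := by simpa [mainHook] using hhook
    have hrest : IsPartition rest :=
      ⟨hl.1.of_cons, fun x hx => hl.2 x (List.mem_cons_of_mem a hx)⟩
    have hlow : hh a * schur rest - schur (a :: rest) ∈ gSpanAbove k a := by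
      rw [← neg_sub]
      exact hSpan_le_gSpanAbove k a (neg_mem (schur_cons_sub_mem_hSpan hle hak))
    calc kSchurWith T (a :: rest) = T a (hh a * schur rest) := by
          rw [kSchurWith, ih hrest ((mainHook_le_of_cons hle).trans hhook), schur_singleton]
      _ = T a (schur (a :: rest)) + T a (hh a * schur rest - schur (a :: rest)) := by
          rw [← map_add, add_sub_cancel]
      _ = schur (a :: rest) := by
          rw [hT.map_schur_of_mainHook_le hl hhook, hT.map_eq_zero_of_mem_gSpanAbove hlow, add_zero]

/-- If `λ` is a `k`-bounded partition with main hook-length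
`h_M(λ) ≤ k`, then the `k`-Schur function equals the Schur function:
`s_λ^{(k)} = s_λ`.  (The `k`-Schur function is computed from any family `T` of
projection operators, all of which agree on `Λ^{(k)}`.) -/
theorem kSchur_eq_schur_of_mainHook_le (k : ℕ) (hk : 1 ≤ k)
    (T : ℕ → (SymFn →ₗ[ℚ] SymFn)) (hT : ProjOps k T)
    (l : List ℕ) (hl : IsPartition l) (hb : KBounded k l)
    (hhook : mainHook l ≤ k) :
    kSchurWith T l = schur l :=
  kSchur_eq_schur_of_mainHook_le_general k T hT l hl hhook
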